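/- arXiv:2604.10804 — 4 statements merged into one kernel-verified Lean document; each statement's English description precedes it below -/
import Mathlib

section
/- Assume 0 < δ < 1 and max{2, 2δ+1} < δ_b < 3. Suppose that for each q ≥ −1 the functions a_q, G_q : [t₀, t₀+T] → [0,∞) are measurable, that the Bernstein-type bound G_q(t) ≤ C_B · Σ_{p=−1}^{q} λ_p^{1+3/r} a_p(t) holds for every q ≥ −1 and every t, that the function t ↦ Λ_b(t) (the abstract magnetic determining wavenumber computed from a(·,t) and G(·,t)) is measurable, and that e_q : [t₀, t₀+T] → [0,∞) are measurable for each q ≥ −1 with ⟨Σ_{q≥−1} λ_q² e_q⟩ < ∞. Assume the intermittency relation ⟨Σ_{q≥−1} λ_q^{−1+δ_b+6/r} a_q²⟩ ≤ C_I · ⟨Σ_{q≥−1} λ_q² e_q⟩ for some constant C_I > 0. Define ε_b := μ · ⟨Σ_{q≥−1} λ_q² e_q⟩ and κ_e := (ε_b/μ³)^{1/(δ_b−1)}. Then there exists a constant C, depending only on L, r, c, δ, δ_b, C_B and C_I, such that ⟨Λ_b⟩ ≤ 1 + C · κ_e. -/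
/-!
Fix a time and let `s = Σ_{q ≥ -1} λ_q^{δ_b - 1 + 6/r} a_q²`. Each term is at most `s`, so
`λ_p^{3/r} a_p ≤ √s λ_p^{-α}` with `α = (δ_b - 1)/2`, and `δ < α < 1`. Because `α ≥ δ`, this
decay bounds every high-mode term `(L λ_{p-q})^δ λ_p^{3/r} a_p`, `p > q`, by `L^δ √s λ_q^{-α}`;
because `α < 1`, the Bernstein sum is a geometric series of ratio `u = 2^{1-α}` dominated by its
top term, so `λ_q^{-1} G_q ≤ C_B u/(u-1) √s λ_q^{-α}`. Hence `q` is admissible as soon as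
`λ_q^α > K √s / (c μ)` with `K = max (L^δ) (C_B u/(u-1))`, and the first such dyadic `λ_q` gives
`Λ_b ≤ 1 + C₀ (s/μ²)^{1/(δ_b-1)}`. Since `1/(δ_b - 1) < 1`, Jensen's inequality moves the time
average inside the power, and the intermittency relation bounds `⟨s⟩` by `C_I ⟨Σ λ_q² e_q⟩`.
-/

open MeasureTheory
open scoped ENNReal

/-- The admissibility condition at level `q` in the definition of the abstract magnetic
determining wavenumber (`λ_q = 2^q`): `(L λ_{p-q})^δ λ_p^{3/r} a_p < c μ` for every
integer `p > q`, and `λ_q^{-1} G_q < c μ`. -/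
def GoodB (L c μ r δ : ℝ) (a G : ℤ → ℝ) (q : ℕ) : Prop :=
  (∀ p : ℤ, (q : ℤ) < p →
      (L * (2:ℝ) ^ (p - (q : ℤ))) ^ δ * ((2:ℝ) ^ p) ^ (3 / r) * a p < c * μ) ∧
    ((2:ℝ) ^ (q : ℤ))⁻¹ * G q < c * μ

/-- The abstract magnetic determining wavenumber `Λ_b = λ_Q = 2^Q`, where `Q` is the
least admissible natural number; `Λ_b = ∞` if no natural number is admissible. -/
noncomputable def LambdaB (L c μ r δ : ℝ) (a G : ℤ → ℝ) : ℝ≥0∞ :=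
  sInf {x : ℝ≥0∞ | ∃ q : ℕ, GoodB L c μ r δ a G q ∧ x = 2 ^ q}

/-- Time average `⟨f⟩ = (1/T) ∫_{t₀}^{t₀+T} f` of an `ℝ≥0∞`-valued function. -/
noncomputable def timeAvg (t₀ T : ℝ) (f : ℝ → ℝ≥0∞) : ℝ≥0∞ :=
  (∫⁻ t in Set.Icc t₀ (t₀ + T), f t) / ENNReal.ofReal T

/-- Sum over dyadic indices `q ≥ -1` of an `ℝ≥0∞`-valued quantity. -/
noncomputable def sumQ (F : ℤ → ℝ≥0∞) : ℝ≥0∞ :=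
  ∑' n : ℕ, F ((n : ℤ) - 1)

lemma sum_zpow_Icc_le {u : ℝ} (hu : 1 < u) {m n : ℤ} (hmn : m ≤ n) :
    ∑ p ∈ Finset.Icc m n, u ^ p ≤ u ^ n * (u / (u - 1)) := by
  have hu0 : 0 < u := zero_lt_one.trans hu
  have hu1 : 0 < u - 1 := sub_pos.2 hu
  induction n, hmn using Int.leInduction with
  | base =>
    rw [Finset.Icc_self, Finset.sum_singleton]
    exact le_mul_of_one_le_right (zpow_pos hu0 _).le ((one_le_div hu1).2 (by linarith))
  | succ n hmn ih =>
    rw [← Finset.insert_Icc_right_eq_Icc_add_one (by omega),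
      Finset.sum_insert (by simp), zpow_add_one₀ hu0.ne']
    calc u ^ n * u + ∑ p ∈ Finset.Icc m n, u ^ p
        ≤ u ^ n * u + u ^ n * (u / (u - 1)) := by gcongr
      _ = u ^ n * u * (u / (u - 1)) := by field_simp; ring

lemma exists_two_pow_gt_and_le {x : ℝ} (hx : 0 ≤ x) :
    ∃ n : ℕ, x < 2 ^ n ∧ (2 : ℝ) ^ n ≤ 1 + 2 * x := by
  rcases lt_or_ge x 1 with hx1 | hx1
  · exact ⟨0, by simpa using hx1, by simpa using hx⟩
  · obtain ⟨n, hnx, hxn⟩ := exists_nat_pow_near hx1 one_lt_two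
    exact ⟨n + 1, hxn, by rw [pow_succ]; linarith⟩

lemma rpow_mul_le_sqrt_mul_rpow_neg {y x s α β : ℝ} (hy : 0 < y)
    (h : y ^ (2 * α + 2 * β) * x ^ 2 ≤ s) : y ^ β * x ≤ √s * y ^ (-α) := by
  have hsq : y ^ (2 * α + 2 * β) * x ^ 2 = (y ^ (α + β) * x) ^ 2 := by
    rw [mul_pow, ← Real.rpow_mul_natCast hy.le]; ring_nf
  calc y ^ β * x = y ^ (-α) * (y ^ (α + β) * x) := by
        rw [← mul_assoc, ← Real.rpow_add hy]; ring_nf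
    _ ≤ y ^ (-α) * √s := by
        gcongr
        exact (le_abs_self _).trans (Real.abs_le_sqrt (hsq ▸ h))
    _ = √s * y ^ (-α) := mul_comm _ _

lemma mul_div_rpow_mul_le {L y z δ α A x : ℝ} (hL : 0 ≤ L) (hz : 0 < z) (hzy : z ≤ y)
    (hδα : δ ≤ α) (hA : 0 ≤ A) (hx : x ≤ A * y ^ (-α)) :
    (L * (y / z)) ^ δ * x ≤ L ^ δ * (A * z ^ (-α)) := by
  have hyz : 1 ≤ y / z := (one_le_div hz).2 hzy
  have hy : y = y / z * z := by field_simp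
  calc (L * (y / z)) ^ δ * x ≤ (L * (y / z)) ^ δ * (A * y ^ (-α)) := by gcongr
    _ = L ^ δ * (A * z ^ (-α)) * (y / z) ^ (δ - α) := by
        rw [hy, Real.mul_rpow (by positivity) hz.le, mul_div_cancel_right₀ _ hz.ne',
          Real.mul_rpow hL (by positivity), Real.rpow_sub (by positivity),
          Real.rpow_neg (by positivity : (0:ℝ) ≤ y / z)]
        field_simp
    _ ≤ L ^ δ * (A * z ^ (-α)) :=
        mul_le_of_le_one_right (by positivity)
          (Real.rpow_le_one_of_one_le_of_nonpos hyz (by linarith))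

lemma inv_mul_le_of_le_sum_Icc {r α CB A g : ℝ} {a : ℤ → ℝ} {m Q : ℤ} (hmQ : m ≤ Q)
    (hα : α < 1) (hCB : 0 ≤ CB) (hA : 0 ≤ A)
    (hdecay : ∀ p ∈ Finset.Icc m Q, ((2:ℝ) ^ p) ^ (3 / r) * a p ≤ A * ((2:ℝ) ^ p) ^ (-α))
    (hg : g ≤ CB * ∑ p ∈ Finset.Icc m Q, ((2:ℝ) ^ p) ^ (1 + 3 / r) * a p) :
    ((2:ℝ) ^ Q)⁻¹ * g ≤ CB * (2 ^ (1 - α) / (2 ^ (1 - α) - 1)) * (A * ((2:ℝ) ^ Q) ^ (-α)) := by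
  set u : ℝ := 2 ^ (1 - α)
  have hu : 1 < u := Real.one_lt_rpow one_lt_two (by linarith)
  have hpow : ∀ p : ℤ, ((2:ℝ) ^ p) ^ (1 - α) = u ^ p := fun p => by
    rw [← Real.rpow_intCast_mul zero_le_two, mul_comm, Real.rpow_mul_intCast zero_le_two]
  have hterm : ∀ p ∈ Finset.Icc m Q, ((2:ℝ) ^ p) ^ (1 + 3 / r) * a p ≤ A * u ^ p := by
    intro p hp
    have h2p : (0:ℝ) < 2 ^ p := zpow_pos two_pos p
    calc ((2:ℝ) ^ p) ^ (1 + 3 / r) * a p = 2 ^ p * (((2:ℝ) ^ p) ^ (3 / r) * a p) := by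
          rw [Real.rpow_add h2p, Real.rpow_one, mul_assoc]
      _ ≤ 2 ^ p * (A * ((2:ℝ) ^ p) ^ (-α)) := by gcongr 2 ^ p * ?_; exact hdecay p hp
      _ = A * u ^ p := by
          rw [← hpow, sub_eq_add_neg, Real.rpow_add h2p, Real.rpow_one]; ring
  have h2Q : (0:ℝ) < 2 ^ Q := zpow_pos two_pos Q
  calc ((2:ℝ) ^ Q)⁻¹ * g
      ≤ ((2:ℝ) ^ Q)⁻¹ * (CB * (A * (u ^ Q * (u / (u - 1))))) := by
        gcongr
        calc g ≤ CB * ∑ p ∈ Finset.Icc m Q, ((2:ℝ) ^ p) ^ (1 + 3 / r) * a p := hg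
          _ ≤ CB * ∑ p ∈ Finset.Icc m Q, A * u ^ p := by
              gcongr CB * ?_; exact Finset.sum_le_sum hterm
          _ ≤ CB * (A * (u ^ Q * (u / (u - 1)))) := by
              rw [← Finset.mul_sum]; gcongr; exact sum_zpow_Icc_le hu hmQ
    _ = CB * (u / (u - 1)) * (A * ((2:ℝ) ^ Q) ^ (-α)) := by
        rw [← hpow, sub_eq_add_neg, Real.rpow_add h2Q, Real.rpow_one]
        field_simp

noncomputable def admissibilityConst (L δ CB α : ℝ) : ℝ :=
  max (L ^ δ) (CB * (2 ^ (1 - α) / (2 ^ (1 - α) - 1)))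

lemma admissibilityConst_pos {L δ CB α : ℝ} (hL : 0 < L) : 0 < admissibilityConst L δ CB α :=
  (Real.rpow_pos_of_pos hL δ).trans_le (le_max_left _ _)

lemma goodB_of_decay {L c μ r δ α CB A : ℝ} {a G : ℤ → ℝ} {Q : ℕ}
    (hL : 0 ≤ L) (hCB : 0 ≤ CB) (hA : 0 ≤ A) (hδα : δ ≤ α) (hα : α < 1)
    (hdecay : ∀ p : ℤ, -1 ≤ p → ((2:ℝ) ^ p) ^ (3 / r) * a p ≤ A * ((2:ℝ) ^ p) ^ (-α))
    (hB : ∀ q : ℤ, -1 ≤ q →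
      G q ≤ CB * ∑ p ∈ Finset.Icc (-1 : ℤ) q, ((2:ℝ) ^ p) ^ (1 + 3 / r) * a p)
    (hQ : admissibilityConst L δ CB α * (A * ((2:ℝ) ^ (Q:ℤ)) ^ (-α)) < c * μ) :
    GoodB L c μ r δ a G Q := by
  have hAQ : 0 ≤ A * ((2:ℝ) ^ (Q:ℤ)) ^ (-α) := by positivity
  constructor
  · intro p hQp
    rw [zpow_sub₀ two_ne_zero, mul_assoc]
    calc _ ≤ L ^ δ * (A * ((2:ℝ) ^ (Q:ℤ)) ^ (-α)) :=
          mul_div_rpow_mul_le hL (zpow_pos two_pos _) (zpow_le_zpow_right₀ one_le_two hQp.le)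
            hδα hA (hdecay p (by omega))
      _ ≤ _ := mul_le_mul_of_nonneg_right (le_max_left _ _) hAQ
      _ < c * μ := hQ
  · calc _ ≤ CB * (2 ^ (1 - α) / (2 ^ (1 - α) - 1)) * (A * ((2:ℝ) ^ (Q:ℤ)) ^ (-α)) :=
          inv_mul_le_of_le_sum_Icc (by omega) hα hCB hA
            (fun p hp => hdecay p (Finset.mem_Icc.1 hp).1) (hB Q (by omega))
      _ ≤ _ := mul_le_mul_of_nonneg_right (le_max_right _ _) hAQ
      _ < c * μ := hQ

lemma lambdaB_le_of_decay {L c μ r δ α CB A : ℝ} {a G : ℤ → ℝ}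
    (hL : 0 ≤ L) (hc : 0 < c) (hμ : 0 < μ) (hCB : 0 ≤ CB) (hA : 0 ≤ A)
    (hδα : δ ≤ α) (hα0 : 0 < α) (hα : α < 1)
    (hdecay : ∀ p : ℤ, -1 ≤ p → ((2:ℝ) ^ p) ^ (3 / r) * a p ≤ A * ((2:ℝ) ^ p) ^ (-α))
    (hB : ∀ q : ℤ, -1 ≤ q →
      G q ≤ CB * ∑ p ∈ Finset.Icc (-1 : ℤ) q, ((2:ℝ) ^ p) ^ (1 + 3 / r) * a p) :
    LambdaB L c μ r δ a G ≤
      ENNReal.ofReal (1 + 2 * (admissibilityConst L δ CB α * A / (c * μ)) ^ α⁻¹) := by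
  set K := admissibilityConst L δ CB α
  have hK : 0 ≤ K := (Real.rpow_nonneg hL δ).trans (le_max_left _ _)
  have hx : 0 ≤ K * A / (c * μ) := by positivity
  obtain ⟨Q, hXQ, hQX⟩ := exists_two_pow_gt_and_le (Real.rpow_nonneg hx α⁻¹)
  have hKA : K * A / (c * μ) < ((2:ℝ) ^ (Q:ℤ)) ^ α := by
    have := Real.rpow_lt_rpow (by positivity) hXQ hα0
    rwa [Real.rpow_inv_rpow hx hα0.ne', ← zpow_natCast] at this
  have hgood : GoodB L c μ r δ a G Q := by
    refine goodB_of_decay hL hCB hA hδα hα hdecay hB ?_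
    rw [Real.rpow_neg (by positivity), ← mul_assoc, ← div_eq_mul_inv, div_lt_iff₀ (by positivity)]
    rw [div_lt_iff₀ (by positivity)] at hKA
    linarith
  calc LambdaB L c μ r δ a G ≤ 2 ^ Q := sInf_le ⟨Q, hgood, rfl⟩
    _ = ENNReal.ofReal (2 ^ Q) := by rw [ENNReal.ofReal_pow zero_le_two, ENNReal.ofReal_ofNat]
    _ ≤ _ := ENNReal.ofReal_le_ofReal hQX

lemma le_sumQ (F : ℤ → ℝ≥0∞) {q : ℤ} (hq : -1 ≤ q) : F q ≤ sumQ F := by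
  have h := ENNReal.le_tsum (f := fun n : ℕ => F ((n : ℤ) - 1)) (q + 1).toNat
  rwa [show ((q + 1).toNat : ℤ) - 1 = q by omega] at h

lemma sqrt_div_rpow_two_mul {s μ θ : ℝ} (hs : 0 ≤ s) (hμ : 0 < μ) :
    (√s / μ) ^ (2 * θ) = (s / μ ^ 2) ^ θ := by
  rw [Real.rpow_mul (by positivity), Real.rpow_two, div_pow, Real.sq_sqrt hs]

lemma lambdaB_le_one_add_rpow_sumQ {L c μ r δ δb CB : ℝ} {a G : ℤ → ℝ}
    (hL : 0 < L) (hc : 0 < c) (hμ : 0 < μ) (hCB : 0 ≤ CB)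
    (hδb : 2 * δ + 1 ≤ δb) (hδb1 : 1 < δb) (hδb3 : δb < 3)
    (hB : ∀ q : ℤ, -1 ≤ q →
      G q ≤ CB * ∑ p ∈ Finset.Icc (-1 : ℤ) q, ((2:ℝ) ^ p) ^ (1 + 3 / r) * a p) :
    LambdaB L c μ r δ a G ≤
      1 + ENNReal.ofReal
          (2 * (admissibilityConst L δ CB ((δb - 1) / 2) / c) ^ (2 * (1 / (δb - 1)))) *
        (sumQ (fun q => ENNReal.ofReal (((2:ℝ) ^ q) ^ (-1 + δb + 6 / r) * a q ^ 2)) /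
          ENNReal.ofReal μ ^ 2) ^ (1 / (δb - 1)) := by
  set K := admissibilityConst L δ CB ((δb - 1) / 2)
  set S := sumQ (fun q => ENNReal.ofReal (((2:ℝ) ^ q) ^ (-1 + δb + 6 / r) * a q ^ 2))
  have hθ : 0 < 1 / (δb - 1) := one_div_pos.2 (by linarith)
  have hK : 0 < K := admissibilityConst_pos hL
  by_cases hS : S = ⊤
  · rw [hS, ENNReal.top_div_of_ne_top (by simp), ENNReal.top_rpow_of_pos hθ,
      ENNReal.mul_top (by simp; positivity)]
    exact le_top
  set s := S.toReal
  have hs : 0 ≤ s := ENNReal.toReal_nonneg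
  have hdecay : ∀ p : ℤ, -1 ≤ p →
      ((2:ℝ) ^ p) ^ (3 / r) * a p ≤ √s * ((2:ℝ) ^ p) ^ (-((δb - 1) / 2)) := by
    intro p hp
    refine rpow_mul_le_sqrt_mul_rpow_neg (zpow_pos two_pos p) ?_
    have h := ENNReal.toReal_mono hS (le_sumQ _ hp)
    rw [ENNReal.toReal_ofReal (by positivity)] at h
    convert h using 3; ring
  calc LambdaB L c μ r δ a G
      ≤ ENNReal.ofReal (1 + 2 * (K * √s / (c * μ)) ^ ((δb - 1) / 2)⁻¹) :=
        lambdaB_le_of_decay hL.le hc hμ hCB (Real.sqrt_nonneg s) (by linarith) (by linarith)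
          (by linarith) hdecay hB
    _ = ENNReal.ofReal (1 + 2 * (K / c) ^ (2 * (1 / (δb - 1))) * (s / μ ^ 2) ^ (1 / (δb - 1))) := by
        rw [show ((δb - 1) / 2)⁻¹ = 2 * (1 / (δb - 1)) by field_simp, mul_div_mul_comm,
          Real.mul_rpow (by positivity) (by positivity), sqrt_div_rpow_two_mul hs hμ, mul_assoc]
    _ = _ := by
        rw [ENNReal.ofReal_add zero_le_one (by positivity), ENNReal.ofReal_one,
          ENNReal.ofReal_mul (by positivity), ← ENNReal.ofReal_rpow_of_nonneg (by positivity) hθ.le,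
          ENNReal.ofReal_div_of_pos (by positivity), ENNReal.ofReal_pow hμ.le,
          ENNReal.ofReal_toReal hS]

section timeAvg

variable {t₀ T : ℝ}

lemma timeAvg_mono {f g : ℝ → ℝ≥0∞} (h : ∀ t ∈ Set.Icc t₀ (t₀ + T), f t ≤ g t) :
    timeAvg t₀ T f ≤ timeAvg t₀ T g :=
  ENNReal.div_le_div_right (setLIntegral_mono' measurableSet_Icc h) _

lemma timeAvg_const_add (hT : 0 < T) (x : ℝ≥0∞) (f : ℝ → ℝ≥0∞) :
    timeAvg t₀ T (fun t => x + f t) = x + timeAvg t₀ T f := by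
  rw [timeAvg, lintegral_add_left measurable_const, ENNReal.add_div, setLIntegral_const,
    Real.volume_Icc, add_sub_cancel_left,
    ENNReal.mul_div_cancel_right (ENNReal.ofReal_pos.2 hT).ne' ENNReal.ofReal_ne_top, timeAvg]

lemma timeAvg_const_mul {x : ℝ≥0∞} (hx : x ≠ ⊤) (f : ℝ → ℝ≥0∞) :
    timeAvg t₀ T (fun t => x * f t) = x * timeAvg t₀ T f := by
  rw [timeAvg, lintegral_const_mul' _ _ hx, mul_div_assoc, timeAvg]

lemma timeAvg_div_const {x : ℝ≥0∞} (hx : x ≠ 0) (f : ℝ → ℝ≥0∞) :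
    timeAvg t₀ T (fun t => f t / x) = timeAvg t₀ T f / x := by
  simp only [timeAvg, div_eq_mul_inv, lintegral_mul_const' _ _ (ENNReal.inv_ne_top.2 hx)]
  exact mul_right_comm _ _ _

noncomputable def timeAvgMeasure (t₀ T : ℝ) : Measure ℝ :=
  (ENNReal.ofReal T)⁻¹ • volume.restrict (Set.Icc t₀ (t₀ + T))

lemma timeAvg_eq_lintegral (f : ℝ → ℝ≥0∞) :
    timeAvg t₀ T f = ∫⁻ t, f t ∂timeAvgMeasure t₀ T := by
  rw [timeAvg, timeAvgMeasure, lintegral_smul_measure, smul_eq_mul, div_eq_mul_inv, mul_comm]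

lemma isProbabilityMeasure_timeAvgMeasure (hT : 0 < T) :
    IsProbabilityMeasure (timeAvgMeasure t₀ T) := by
  constructor
  rw [timeAvgMeasure, Measure.smul_apply, Measure.restrict_apply_univ, Real.volume_Icc,
    add_sub_cancel_left, smul_eq_mul,
    ENNReal.inv_mul_cancel (ENNReal.ofReal_pos.2 hT).ne' ENNReal.ofReal_ne_top]

lemma timeAvg_rpow_le (hT : 0 < T) {f : ℝ → ℝ≥0∞} (hf : Measurable f) {θ : ℝ}
    (hθ0 : 0 < θ) (hθ1 : θ ≤ 1) :
    timeAvg t₀ T (fun t => f t ^ θ) ≤ timeAvg t₀ T f ^ θ := by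
  have := isProbabilityMeasure_timeAvgMeasure (t₀ := t₀) hT
  have h := eLpNorm'_le_eLpNorm'_of_exponent_le (f := fun t => f t ^ θ) zero_lt_one
    ((one_le_div hθ0).2 hθ1) (timeAvgMeasure t₀ T) (hf.pow_const θ).aestronglyMeasurable
  simp only [eLpNorm', enorm_eq_self, ENNReal.rpow_one, div_one, one_div_one_div,
    ← ENNReal.rpow_mul, mul_one_div_cancel hθ0.ne'] at h
  simpa only [timeAvg_eq_lintegral] using h

end timeAvg

theorem avg_magnetic_wavenumber_emhd_general
    (L r c δ δb CB CI : ℝ)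
    (hL : 1 ≤ L) (hc : 0 < c) (hCB : 0 < CB) (hCI : 0 < CI)
    (hδb1 : max 2 (2 * δ + 1) < δb) (hδb3 : δb < 3) :
    ∃ C : ℝ, 0 < C ∧
      ∀ (μ T t₀ : ℝ) (a G e : ℤ → ℝ → ℝ),
        0 < μ → 0 < T →
        (∀ q : ℤ, -1 ≤ q → Measurable (a q)) →
        (∀ q : ℤ, -1 ≤ q → Measurable (G q)) →
        (∀ q : ℤ, -1 ≤ q → Measurable (e q)) →
        (∀ q : ℤ, -1 ≤ q → ∀ t ∈ Set.Icc t₀ (t₀ + T), 0 ≤ a q t) →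
        (∀ q : ℤ, -1 ≤ q → ∀ t ∈ Set.Icc t₀ (t₀ + T), 0 ≤ G q t) →
        (∀ q : ℤ, -1 ≤ q → ∀ t ∈ Set.Icc t₀ (t₀ + T), 0 ≤ e q t) →
        -- Bernstein-type bound for every `q ≥ -1` and every `t`
        (∀ q : ℤ, -1 ≤ q → ∀ t ∈ Set.Icc t₀ (t₀ + T),
            G q t ≤ CB * ∑ p ∈ Finset.Icc (-1 : ℤ) q,
              ((2:ℝ) ^ p) ^ (1 + 3 / r) * a p t) →
        -- measurability of `t ↦ Λ_b(t)`
        Measurable (fun t => LambdaB L c μ r δ (fun q => a q t) (fun q => G q t)) →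
        -- finiteness of `⟨Σ_{q≥-1} λ_q² e_q⟩`
        timeAvg t₀ T (fun t => sumQ fun q =>
            ENNReal.ofReal (((2:ℝ) ^ q) ^ 2 * e q t)) ≠ ⊤ →
        -- intermittency relation
        timeAvg t₀ T (fun t => sumQ fun q =>
            ENNReal.ofReal (((2:ℝ) ^ q) ^ (-1 + δb + 6 / r) * a q t ^ 2)) ≤
          ENNReal.ofReal CI *
            timeAvg t₀ T (fun t => sumQ fun q =>
              ENNReal.ofReal (((2:ℝ) ^ q) ^ 2 * e q t)) →
        -- conclusion: `⟨Λ_b⟩ ≤ 1 + C κ_e`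
        timeAvg t₀ T (fun t => LambdaB L c μ r δ (fun q => a q t) (fun q => G q t)) ≤
          1 + ENNReal.ofReal C *
            ((ENNReal.ofReal μ *
                timeAvg t₀ T (fun t => sumQ fun q =>
                  ENNReal.ofReal (((2:ℝ) ^ q) ^ 2 * e q t)) /
              ENNReal.ofReal μ ^ 3) ^ (1 / (δb - 1))) := by
  have hδb : 2 * δ + 1 ≤ δb := (le_max_right _ _).trans hδb1.le
  have hδb2 : 2 < δb := (le_max_left _ _).trans_lt hδb1
  set θ := 1 / (δb - 1)
  have hθ0 : 0 < θ := one_div_pos.2 (by linarith)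
  have hθ1 : θ ≤ 1 := (div_le_one (by linarith)).2 (by linarith)
  have hK := admissibilityConst_pos (L := L) (δ := δ) (CB := CB) (α := (δb - 1) / 2) (by linarith)
  set C₀ := 2 * (admissibilityConst L δ CB ((δb - 1) / 2) / c) ^ (2 * θ)
  have hC₀ : 0 < C₀ := mul_pos two_pos (Real.rpow_pos_of_pos (div_pos hK hc) _)
  refine ⟨C₀ * CI ^ θ, by positivity, ?_⟩
  intro μ T t₀ a G e hμ hT ha _ _ _ _ _ hB _ _ hI
  set E := timeAvg t₀ T (fun t => sumQ fun q => ENNReal.ofReal (((2:ℝ) ^ q) ^ 2 * e q t))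
  set S := fun t => sumQ fun q => ENNReal.ofReal (((2:ℝ) ^ q) ^ (-1 + δb + 6 / r) * a q t ^ 2)
  have hS : Measurable S := Measurable.tsum fun n =>
    (((ha _ (by omega)).pow_const 2).const_mul _).ennreal_ofReal
  have hμ0 : ENNReal.ofReal μ ≠ 0 := (ENNReal.ofReal_pos.2 hμ).ne'
  calc timeAvg t₀ T (fun t => LambdaB L c μ r δ (fun q => a q t) (fun q => G q t))
      ≤ timeAvg t₀ T (fun t => 1 + ENNReal.ofReal C₀ * (S t / ENNReal.ofReal μ ^ 2) ^ θ) :=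
        timeAvg_mono fun t ht => lambdaB_le_one_add_rpow_sumQ (by linarith) hc hμ hCB.le hδb
          (by linarith) hδb3 (fun q hq => hB q hq t ht)
    _ = 1 + ENNReal.ofReal C₀ * timeAvg t₀ T (fun t => (S t / ENNReal.ofReal μ ^ 2) ^ θ) := by
        rw [timeAvg_const_add hT, timeAvg_const_mul ENNReal.ofReal_ne_top]
    _ ≤ 1 + ENNReal.ofReal C₀ * (timeAvg t₀ T S / ENNReal.ofReal μ ^ 2) ^ θ := by
        rw [← timeAvg_div_const (pow_ne_zero 2 hμ0)]
        gcongr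
        exact timeAvg_rpow_le hT (hS.div_const _) hθ0 hθ1
    _ ≤ 1 + ENNReal.ofReal C₀ * (ENNReal.ofReal CI * E / ENNReal.ofReal μ ^ 2) ^ θ := by
        gcongr
    _ = 1 + ENNReal.ofReal (C₀ * CI ^ θ) * (ENNReal.ofReal μ * E / ENNReal.ofReal μ ^ 3) ^ θ := by
        rw [pow_succ' _ 2, ENNReal.mul_div_mul_left _ _ hμ0 ENNReal.ofReal_ne_top, mul_div_assoc,
          ENNReal.mul_rpow_of_nonneg _ _ hθ0.le, ENNReal.ofReal_rpow_of_pos hCI, ← mul_assoc,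
          ENNReal.ofReal_mul hC₀.le]

/-- the time-averaged magnetic determining wavenumber for EMHD is bounded
by the phenomenological dissipation wavenumber: `⟨Λ_b⟩ ≤ λ_0 + C κ_e = 1 + C κ_e`, where
`κ_e = (ε_b/μ³)^{1/(δ_b-1)}` and `ε_b = μ ⟨Σ_{q≥-1} λ_q² e_q⟩`, under the
scale-localized intermittency assumption. -/
theorem avg_magnetic_wavenumber_emhd
    (L r c δ δb CB CI : ℝ)
    (hL : 1 ≤ L) (hr : 0 < r) (hc : 0 < c) (hCB : 0 < CB) (hCI : 0 < CI)
    (hδ0 : 0 < δ) (hδ1 : δ < 1) (hδb1 : max 2 (2 * δ + 1) < δb) (hδb3 : δb < 3) :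
    ∃ C : ℝ, 0 < C ∧
      ∀ (μ T t₀ : ℝ) (a G e : ℤ → ℝ → ℝ),
        0 < μ → 0 < T →
        (∀ q : ℤ, -1 ≤ q → Measurable (a q)) →
        (∀ q : ℤ, -1 ≤ q → Measurable (G q)) →
        (∀ q : ℤ, -1 ≤ q → Measurable (e q)) →
        (∀ q : ℤ, -1 ≤ q → ∀ t ∈ Set.Icc t₀ (t₀ + T), 0 ≤ a q t) →
        (∀ q : ℤ, -1 ≤ q → ∀ t ∈ Set.Icc t₀ (t₀ + T), 0 ≤ G q t) →
        (∀ q : ℤ, -1 ≤ q → ∀ t ∈ Set.Icc t₀ (t₀ + T), 0 ≤ e q t) →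
        -- Bernstein-type bound for every `q ≥ -1` and every `t`
        (∀ q : ℤ, -1 ≤ q → ∀ t ∈ Set.Icc t₀ (t₀ + T),
            G q t ≤ CB * ∑ p ∈ Finset.Icc (-1 : ℤ) q,
              ((2:ℝ) ^ p) ^ (1 + 3 / r) * a p t) →
        -- measurability of `t ↦ Λ_b(t)`
        Measurable (fun t => LambdaB L c μ r δ (fun q => a q t) (fun q => G q t)) →
        -- finiteness of `⟨Σ_{q≥-1} λ_q² e_q⟩`
        timeAvg t₀ T (fun t => sumQ fun q =>
            ENNReal.ofReal (((2:ℝ) ^ q) ^ 2 * e q t)) ≠ ⊤ →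
        -- intermittency relation
        timeAvg t₀ T (fun t => sumQ fun q =>
            ENNReal.ofReal (((2:ℝ) ^ q) ^ (-1 + δb + 6 / r) * a q t ^ 2)) ≤
          ENNReal.ofReal CI *
            timeAvg t₀ T (fun t => sumQ fun q =>
              ENNReal.ofReal (((2:ℝ) ^ q) ^ 2 * e q t)) →
        -- conclusion: `⟨Λ_b⟩ ≤ 1 + C κ_e`
        timeAvg t₀ T (fun t => LambdaB L c μ r δ (fun q => a q t) (fun q => G q t)) ≤
          1 + ENNReal.ofReal C *
            ((ENNReal.ofReal μ *
                timeAvg t₀ T (fun t => sumQ fun q =>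
                  ENNReal.ofReal (((2:ℝ) ^ q) ^ 2 * e q t)) /
              ENNReal.ofReal μ ^ 3) ^ (1 / (δb - 1))) :=
  avg_magnetic_wavenumber_emhd_general L r c δ δb CB CI hL hc hCB hCI hδb1 hδb3
end

section
/- Assume 0 < δ < 1 and 2δ+1 < δ_b < 3. Then there exists a constant C, depending only on L, r, δ, δ_b and C_B, such that whenever Λ_b < ∞ one has (c μ)² · max(Λ_b − 1, 0)^{δ_b−1} ≤ C · Σ_{q≥−1} λ_q^{−1+δ_b+6/r} a_q². -/
open scoped ENNReal

open Finset

lemma sum_Icc_zpow_le {x : ℝ} (hx : 1 < x) (m n : ℤ) :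
    ∑ p ∈ Icc m n, x ^ p ≤ x ^ (n + 1) / (x - 1) := by
  have hx1 : 0 < x - 1 := sub_pos.2 hx
  rcases lt_or_ge n (m - 1) with hnm | hmn
  · rw [Icc_eq_empty_of_lt (by omega), sum_empty]
    positivity
  induction n, hmn using Int.leInduction with
  | base => rw [Icc_eq_empty_of_lt (by omega), sum_empty]; positivity
  | succ n hmn ih =>
    rw [← insert_Icc_right_eq_Icc_add_one (by omega), sum_insert (by simp)]
    calc x ^ (n + 1) + ∑ p ∈ Icc m n, x ^ p ≤ x ^ (n + 1) + x ^ (n + 1) / (x - 1) := by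
          gcongr
      _ = x ^ (n + 1 + 1) / (x - 1) := by
          rw [zpow_add_one₀ (by positivity) (n + 1)]
          field_simp
          ring

lemma rpow_sq_eq_rpow_two_mul {x : ℝ} (hx : 0 ≤ x) (y : ℝ) : (x ^ y) ^ 2 = x ^ (2 * y) := by
  rw [← Real.rpow_two, ← Real.rpow_mul hx, mul_comm]

/-- Cauchy–Schwarz against the geometric weights `λ_p^s`. -/
lemma sq_sum_zpow_rpow_mul_le {s : ℝ} (hs : 0 < s) (β : ℝ) (a : ℤ → ℝ) (m n : ℤ) :
    (∑ p ∈ Icc m n, ((2:ℝ) ^ p) ^ β * a p) ^ 2 ≤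
      ((2:ℝ) ^ (n + 1)) ^ s / (2 ^ s - 1) *
        ∑ p ∈ Icc m n, ((2:ℝ) ^ p) ^ (2 * β - s) * a p ^ 2 := by
  have hsplit : ∀ p ∈ Icc m n, (((2:ℝ) ^ p) ^ β * a p) ^ 2 =
      ((2:ℝ) ^ p) ^ s * (((2:ℝ) ^ p) ^ (2 * β - s) * a p ^ 2) := by
    intro p _
    rw [← mul_assoc, ← Real.rpow_add (by positivity), add_sub_cancel,
      ← rpow_sq_eq_rpow_two_mul (by positivity)]
    ring
  have hgeom : ∑ p ∈ Icc m n, ((2:ℝ) ^ p) ^ s ≤ ((2:ℝ) ^ (n + 1)) ^ s / (2 ^ s - 1) := by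
    simp only [← Real.rpow_zpow_comm zero_le_two]
    exact sum_Icc_zpow_le (Real.one_lt_rpow one_lt_two hs) m n
  calc _ ≤ (∑ p ∈ Icc m n, ((2:ℝ) ^ p) ^ s) *
        ∑ p ∈ Icc m n, ((2:ℝ) ^ p) ^ (2 * β - s) * a p ^ 2 :=
        sum_sq_le_sum_mul_sum_of_sq_le_mul _ (fun p _ => by positivity)
          (fun p _ => by positivity) (fun p hp => (hsplit p hp).le)
    _ ≤ _ := by gcongr

lemma sq_mul_rpow_le_of_le_tail {L δ δb r x a : ℝ} (hL : 0 ≤ L) (hδ : 2 * δ + 1 ≤ δb)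
    {p q : ℤ} (hqp : q < p) (hx : 0 ≤ x)
    (h : x ≤ (L * (2:ℝ) ^ (p - q)) ^ δ * ((2:ℝ) ^ p) ^ (3 / r) * a) :
    x ^ 2 * ((2:ℝ) ^ (q + 1)) ^ (δb - 1) ≤
      (2 * L) ^ (2 * δ) * (((2:ℝ) ^ p) ^ (-1 + δb + 6 / r) * a ^ 2) := by
  have hk : 1 ≤ (2:ℝ) ^ (p - q - 1) := one_le_zpow₀ one_le_two (by omega)
  have hshift : L * (2:ℝ) ^ (p - q) = 2 * L * 2 ^ (p - q - 1) := by
    rw [mul_right_comm, ← zpow_one_add₀ two_ne_zero]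
    ring_nf
  have hsplit : (2:ℝ) ^ p = 2 ^ (p - q - 1) * 2 ^ (q + 1) := by
    rw [← zpow_add₀ two_ne_zero]
    ring_nf
  calc x ^ 2 * ((2:ℝ) ^ (q + 1)) ^ (δb - 1)
      ≤ ((L * (2:ℝ) ^ (p - q)) ^ δ * ((2:ℝ) ^ p) ^ (3 / r) * a) ^ 2 *
          ((2:ℝ) ^ (q + 1)) ^ (δb - 1) := by gcongr
    _ = (2 * L) ^ (2 * δ) *
          ((((2:ℝ) ^ (p - q - 1)) ^ (2 * δ) * ((2:ℝ) ^ (q + 1)) ^ (δb - 1)) *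
            (((2:ℝ) ^ p) ^ (2 * (3 / r)) * a ^ 2)) := by
        rw [hshift, Real.mul_rpow (by positivity) (by positivity), mul_pow, mul_pow, mul_pow,
          rpow_sq_eq_rpow_two_mul (by positivity), rpow_sq_eq_rpow_two_mul (by positivity),
          rpow_sq_eq_rpow_two_mul (by positivity)]
        ring
    _ ≤ (2 * L) ^ (2 * δ) *
          ((((2:ℝ) ^ (p - q - 1)) ^ (δb - 1) * ((2:ℝ) ^ (q + 1)) ^ (δb - 1)) *
            (((2:ℝ) ^ p) ^ (2 * (3 / r)) * a ^ 2)) := by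
        gcongr
        linarith
    _ = (2 * L) ^ (2 * δ) * (((2:ℝ) ^ p) ^ (-1 + δb + 6 / r) * a ^ 2) := by
        rw [← Real.mul_rpow (by positivity) (by positivity), ← hsplit,
          show -1 + δb + 6 / r = (δb - 1) + 2 * (3 / r) by ring, Real.rpow_add (by positivity)]
        ring

lemma sq_mul_rpow_le_of_le_bernstein {r δb CB x G : ℝ} (hδb : δb < 3) (a : ℤ → ℝ) (m q : ℤ)
    (hx : 0 ≤ x) (h : x ≤ ((2:ℝ) ^ q)⁻¹ * G)
    (hG : G ≤ CB * ∑ p ∈ Icc m q, ((2:ℝ) ^ p) ^ (1 + 3 / r) * a p) :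
    x ^ 2 * ((2:ℝ) ^ (q + 1)) ^ (δb - 1) ≤
      4 * CB ^ 2 / (2 ^ (3 - δb) - 1) *
        ∑ p ∈ Icc m q, ((2:ℝ) ^ p) ^ (-1 + δb + 6 / r) * a p ^ 2 := by
  set Λ := (2:ℝ) ^ (q + 1)
  set S := ∑ p ∈ Icc m q, ((2:ℝ) ^ p) ^ (1 + 3 / r) * a p
  set T := ∑ p ∈ Icc m q, ((2:ℝ) ^ p) ^ (-1 + δb + 6 / r) * a p ^ 2
  have hΛ0 : 0 < Λ := by positivity
  have hΛ : ((2:ℝ) ^ q)⁻¹ = 2 * Λ⁻¹ := by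
    rw [show Λ = 2 ^ q * 2 from zpow_add_one₀ two_ne_zero q]
    field_simp
  have hS : S ^ 2 ≤ Λ ^ (3 - δb) / (2 ^ (3 - δb) - 1) * T := by
    have := sq_sum_zpow_rpow_mul_le (by linarith : 0 < 3 - δb) (1 + 3 / r) a m q
    rwa [show 2 * (1 + 3 / r) - (3 - δb) = -1 + δb + 6 / r by ring] at this
  have hpow : Λ ^ (3 - δb) * Λ ^ (δb - 1) = Λ ^ 2 := by
    rw [← Real.rpow_add (by positivity), ← Real.rpow_two]
    ring_nf
  calc x ^ 2 * Λ ^ (δb - 1) ≤ (2 * Λ⁻¹ * (CB * S)) ^ 2 * Λ ^ (δb - 1) := by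
        gcongr
        rw [← hΛ]
        exact h.trans (by gcongr)
    _ = 4 * CB ^ 2 * (Λ ^ 2)⁻¹ * (S ^ 2 * Λ ^ (δb - 1)) := by ring
    _ ≤ 4 * CB ^ 2 * (Λ ^ 2)⁻¹ * (Λ ^ (3 - δb) / (2 ^ (3 - δb) - 1) * T * Λ ^ (δb - 1)) :=
        by gcongr
    _ = 4 * CB ^ 2 * (Λ ^ 2)⁻¹ * (Λ ^ (3 - δb) * Λ ^ (δb - 1)) * T / (2 ^ (3 - δb) - 1) :=
        by ring
    _ = _ := by
        rw [hpow]
        field_simp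

noncomputable def wavenumberConst (L δ δb CB : ℝ) : ℝ :=
  max ((2 * L) ^ (2 * δ)) (4 * CB ^ 2 / (2 ^ (3 - δb) - 1))

lemma wavenumberConst_pos {L : ℝ} (hL : 0 < L) (δ δb CB : ℝ) :
    0 < wavenumberConst L δ δb CB :=
  lt_max_of_lt_left (Real.rpow_pos_of_pos (by positivity) _)

section Wavenumber

variable {L c μ r δ δb CB : ℝ} {a G : ℤ → ℝ}

lemma exists_LambdaB_eq_two_pow (h : LambdaB L c μ r δ a G ≠ ⊤) :
    ∃ Q : ℕ, LambdaB L c μ r δ a G = 2 ^ Q ∧ ∀ q < Q, ¬ GoodB L c μ r δ a G q := by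
  classical
  have hex : ∃ q, GoodB L c μ r δ a G q := by
    contrapose! h
    exact sInf_eq_top.2 fun _ ⟨q, hq, _⟩ => absurd hq (h q)
  refine ⟨Nat.find hex, le_antisymm (sInf_le ⟨_, Nat.find_spec hex, rfl⟩) ?_,
    fun q => Nat.find_min hex⟩
  exact le_sInf fun _ ⟨q, hq, hx⟩ =>
    hx ▸ pow_le_pow_right₀ one_le_two (Nat.find_min' hex hq)

lemma exists_sq_mul_rpow_le_sum_of_not_goodB (hL : 0 ≤ L) (hδ : 2 * δ + 1 ≤ δb)
    (hδb : δb < 3) (hcμ : 0 ≤ c * μ)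
    (hBern : ∀ q : ℤ, -1 ≤ q →
      G q ≤ CB * ∑ p ∈ Icc (-1) q, ((2:ℝ) ^ p) ^ (1 + 3 / r) * a p)
    {q : ℕ} (hq : ¬ GoodB L c μ r δ a G q) :
    ∃ N : ℤ, (c * μ) ^ 2 * ((2:ℝ) ^ ((q : ℤ) + 1)) ^ (δb - 1) ≤
      wavenumberConst L δ δb CB *
        ∑ p ∈ Icc (-1) N, ((2:ℝ) ^ p) ^ (-1 + δb + 6 / r) * a p ^ 2 := by
  simp only [GoodB, not_and_or, not_forall, not_lt] at hq
  rcases hq with ⟨p, hqp, hp⟩ | hq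
  · refine ⟨p, (sq_mul_rpow_le_of_le_tail hL hδ hqp hcμ hp).trans ?_⟩
    refine mul_le_mul (le_max_left _ _) ?_ (by positivity)
      (le_max_of_le_left (Real.rpow_nonneg (by positivity) _))
    exact single_le_sum (f := fun p => ((2:ℝ) ^ p) ^ (-1 + δb + 6 / r) * a p ^ 2)
      (fun p _ => by positivity) (mem_Icc.2 ⟨by omega, le_rfl⟩)
  · refine ⟨q, le_trans
      (sq_mul_rpow_le_of_le_bernstein hδb a (-1) q hcμ hq (hBern q (by omega))) ?_⟩
    gcongr
    exact le_max_right _ _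

lemma exists_sq_mul_max_rpow_le_sum (hL : 0 ≤ L) (hδ : 2 * δ + 1 ≤ δb) (hδb1 : 1 < δb)
    (hδb3 : δb < 3) (hcμ : 0 ≤ c * μ)
    (hBern : ∀ q : ℤ, -1 ≤ q →
      G q ≤ CB * ∑ p ∈ Icc (-1) q, ((2:ℝ) ^ p) ^ (1 + 3 / r) * a p)
    {Q : ℕ} (hQ : ∀ q < Q, ¬ GoodB L c μ r δ a G q) :
    ∃ N : ℤ, (c * μ) ^ 2 * max ((2:ℝ) ^ Q - 1) 0 ^ (δb - 1) ≤
      wavenumberConst L δ δb CB *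
        ∑ p ∈ Icc (-1) N, ((2:ℝ) ^ p) ^ (-1 + δb + 6 / r) * a p ^ 2 := by
  rcases Q with _ | q
  · refine ⟨-1, ?_⟩
    rw [pow_zero, sub_self, max_self, Real.zero_rpow (by linarith), mul_zero]
    exact mul_nonneg (le_max_of_le_left (Real.rpow_nonneg (by positivity) _))
      (sum_nonneg fun p _ => by positivity)
  · obtain ⟨N, hN⟩ :=
      exists_sq_mul_rpow_le_sum_of_not_goodB hL hδ hδb3 hcμ hBern (hQ q q.lt_add_one)
    have hmax : max ((2:ℝ) ^ (q + 1) - 1) 0 ≤ (2:ℝ) ^ ((q : ℤ) + 1) := by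
      rw [zpow_add_one₀ two_ne_zero, zpow_natCast, pow_succ]
      exact max_le (by linarith) (by positivity)
    exact ⟨N, le_trans (by gcongr) hN⟩

end Wavenumber

lemma ofReal_sum_Icc_le_tsum_shift (f : ℤ → ℝ) (hf : ∀ p, 0 ≤ f p) (N : ℤ) :
    ENNReal.ofReal (∑ p ∈ Icc (-1) N, f p) ≤ ∑' n : ℕ, ENNReal.ofReal (f ((n : ℤ) - 1)) := by
  have hIcc : Icc (-1) N = (range (N + 2).toNat).image fun n : ℕ => (n : ℤ) - 1 := by
    ext p
    simp only [mem_Icc, mem_image, mem_range]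
    constructor
    · intro hp
      exact ⟨(p + 1).toNat, by omega, by omega⟩
    · rintro ⟨n, hn, rfl⟩
      omega
  rw [ENNReal.ofReal_sum_of_nonneg fun p _ => hf p, hIcc,
    sum_image fun _ _ _ _ h => by simpa using h]
  exact ENNReal.sum_le_tsum _

theorem pointwise_magnetic_wavenumber_bound_general
    (L r δ δb CB : ℝ) (hL : 1 ≤ L)
    (hδ0 : 0 < δ) (hδb1 : 2 * δ + 1 < δb) (hδb3 : δb < 3) :
    ∃ C : ℝ, 0 < C ∧
      ∀ (c μ : ℝ) (a G : ℤ → ℝ), 0 < c → 0 < μ →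
        (∀ q : ℤ, -1 ≤ q → 0 ≤ a q) →
        (∀ q : ℤ, -1 ≤ q → 0 ≤ G q) →
        (∀ q : ℤ, -1 ≤ q →
          G q ≤ CB * ∑ p ∈ Finset.Icc (-1 : ℤ) q, ((2:ℝ) ^ p) ^ (1 + 3 / r) * a p) →
        LambdaB L c μ r δ a G ≠ ⊤ →
        ENNReal.ofReal
            ((c * μ) ^ 2 * max ((LambdaB L c μ r δ a G).toReal - 1) 0 ^ (δb - 1)) ≤
          ENNReal.ofReal C *
            ∑' n : ℕ,
              ENNReal.ofReal
                (((2:ℝ) ^ ((n : ℤ) - 1)) ^ (-1 + δb + 6 / r) * a ((n : ℤ) - 1) ^ 2) := by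
  have hC := wavenumberConst_pos (by linarith : 0 < L) δ δb CB
  refine ⟨wavenumberConst L δ δb CB, hC, fun c μ a G hc hμ _ _ hBern hfin => ?_⟩
  obtain ⟨Q, hΛ, hQ⟩ := exists_LambdaB_eq_two_pow hfin
  obtain ⟨N, hN⟩ :=
    exists_sq_mul_max_rpow_le_sum (by linarith) hδb1.le (by linarith) hδb3 (by positivity) hBern hQ
  rw [hΛ, ENNReal.toReal_pow, ENNReal.toReal_ofNat]
  calc _ ≤ ENNReal.ofReal (wavenumberConst L δ δb CB * _) := ENNReal.ofReal_le_ofReal hN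
    _ = _ := ENNReal.ofReal_mul hC.le
    _ ≤ _ := by
        gcongr
        exact ofReal_sum_Icc_le_tsum_shift _ (fun p => by positivity) N

/-- pointwise bound on the magnetic determining wavenumber. Assume
`0 < δ < 1` and `2δ+1 < δ_b < 3`. There is a constant `C` depending only on
`L, r, δ, δ_b, C_B` such that whenever `Λ_b < ∞`,
`(cμ)² max(Λ_b - 1, 0)^{δ_b-1} ≤ C Σ_{q ≥ -1} λ_q^{-1+δ_b+6/r} a_q²`. -/
theorem pointwise_magnetic_wavenumber_bound
    (L r δ δb CB : ℝ) (hL : 1 ≤ L) (hr : 0 < r) (hCB : 0 < CB)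
    (hδ0 : 0 < δ) (hδ1 : δ < 1) (hδb1 : 2 * δ + 1 < δb) (hδb3 : δb < 3) :
    ∃ C : ℝ, 0 < C ∧
      ∀ (c μ : ℝ) (a G : ℤ → ℝ), 0 < c → 0 < μ →
        (∀ q : ℤ, -1 ≤ q → 0 ≤ a q) →
        (∀ q : ℤ, -1 ≤ q → 0 ≤ G q) →
        (∀ q : ℤ, -1 ≤ q →
          G q ≤ CB * ∑ p ∈ Finset.Icc (-1 : ℤ) q, ((2:ℝ) ^ p) ^ (1 + 3 / r) * a p) →
        LambdaB L c μ r δ a G ≠ ⊤ →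
        ENNReal.ofReal
            ((c * μ) ^ 2 * max ((LambdaB L c μ r δ a G).toReal - 1) 0 ^ (δb - 1)) ≤
          ENNReal.ofReal C *
            ∑' n : ℕ,
              ENNReal.ofReal
                (((2:ℝ) ^ ((n : ℤ) - 1)) ^ (-1 + δb + 6 / r) * a ((n : ℤ) - 1) ^ 2) :=
  pointwise_magnetic_wavenumber_bound_general L r δ δb CB hL hδ0 hδb1 hδb3
end

section
/- Assume δ ≥ 0 and 2δ+1 < δ_b < 3. If Σ_{q≥−1} λ_q^{−1+δ_b+6/r} a_q² < ∞, then the set of natural numbers q such that (L λ_{p−q})^δ λ_p^{3/r} a_p < c μ for all integers p > q and λ_q^{−1} G_q < c μ is nonempty; that is, Λ_b < ∞. -/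
open scoped ENNReal

/-! Summability of `Σ λ_p^σ a_p²`, `σ = -1 + δ_b + 6/r`, forces `a_p ≤ ε λ_p^{-(3/r + κ)}` for
all large `p`, where `κ = (δ_b - 1)/2`. As `δ < κ`, every weighted block
`(L λ_{p-q})^δ λ_p^{3/r} a_p` with `p > q ≥ N` is then at most `L^δ ε`. As `0 ≤ 1 - κ < 1`, the
Bernstein sum up to `q` is `O(1) + O(q λ_q^{1-κ}) = o(λ_q)`, so `λ_q^{-1} G_q` eventually drops
below `c μ` as well; `ε` is chosen so that `L^δ ε < c μ`. -/

open Filter Finset Topology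

lemma two_zpow_rpow (p : ℤ) (s : ℝ) : ((2:ℝ) ^ p) ^ s = (2:ℝ) ^ ((p:ℝ) * s) := by
  rw [← Real.rpow_intCast, ← Real.rpow_mul zero_le_two]

lemma lt_mul_rpow_neg_half_of_rpow_mul_sq_lt {w x ε σ : ℝ} (hw : 0 < w) (hε : 0 < ε)
    (h : w ^ σ * x ^ 2 < ε ^ 2) : x < ε * w ^ (-(σ / 2)) := by
  have hsq : (ε * w ^ (-(σ / 2))) ^ 2 = ε ^ 2 / w ^ σ := by
    rw [mul_pow, ← Real.rpow_natCast (w ^ _), ← Real.rpow_mul hw.le,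
      show -(σ / 2) * ((2:ℕ):ℝ) = -σ by push_cast; ring, Real.rpow_neg hw.le, div_eq_mul_inv]
  refine lt_of_pow_lt_pow_left₀ 2 (by positivity) ?_
  rw [hsq, lt_div_iff₀ (by positivity), mul_comm]
  exact h

lemma exists_le_mul_two_zpow_of_summable {a : ℤ → ℝ} {σ ε : ℝ} (hε : 0 < ε)
    (hS : Summable fun n : ℕ => ((2:ℝ) ^ ((n:ℤ) - 1)) ^ σ * a ((n:ℤ) - 1) ^ 2) :
    ∃ N : ℕ, ∀ p : ℤ, (N:ℤ) ≤ p → a p ≤ ε * ((2:ℝ) ^ p) ^ (-(σ / 2)) := by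
  obtain ⟨N, hN⟩ := eventually_atTop.mp
    (hS.tendsto_atTop_zero.eventually_lt_const (pow_pos hε 2))
  refine ⟨N, fun p hp => (lt_mul_rpow_neg_half_of_rpow_mul_sq_lt (by positivity) hε ?_).le⟩
  have h := hN (p + 1).toNat (by omega)
  rwa [show ((p + 1).toNat : ℤ) - 1 = p by omega] at h

lemma weighted_block_le {L δ s κ ε x : ℝ} {p q : ℤ} (hL : 0 ≤ L) (hδ : 0 ≤ δ) (hδκ : δ ≤ κ)
    (hε : 0 ≤ ε) (hq : 0 ≤ q) (hqp : q ≤ p) (hx : x ≤ ε * ((2:ℝ) ^ p) ^ (-(s + κ))) :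
    (L * (2:ℝ) ^ (p - q)) ^ δ * ((2:ℝ) ^ p) ^ s * x ≤ L ^ δ * ε := by
  have hexp : ((p - q : ℤ) : ℝ) * δ + p * s + p * (-(s + κ)) ≤ 0 := by
    have hq' : (0:ℝ) ≤ q := by exact_mod_cast hq
    have hqp' : (q:ℝ) ≤ p := by exact_mod_cast hqp
    push_cast
    nlinarith [mul_nonneg hq' hδ, mul_nonneg (hq'.trans hqp') (sub_nonneg.mpr hδκ)]
  calc (L * (2:ℝ) ^ (p - q)) ^ δ * ((2:ℝ) ^ p) ^ s * x
      ≤ (L * (2:ℝ) ^ (p - q)) ^ δ * ((2:ℝ) ^ p) ^ s * (ε * ((2:ℝ) ^ p) ^ (-(s + κ))) :=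
        mul_le_mul_of_nonneg_left hx (by positivity)
    _ = L ^ δ * ε * (2:ℝ) ^ (((p - q : ℤ) : ℝ) * δ + p * s + p * (-(s + κ))) := by
        rw [Real.mul_rpow hL (by positivity), two_zpow_rpow, two_zpow_rpow, two_zpow_rpow,
          Real.rpow_add two_pos, Real.rpow_add two_pos]
        ring
    _ ≤ L ^ δ * ε :=
        mul_le_of_le_one_right (by positivity)
          (Real.rpow_le_one_of_one_le_of_nonpos one_le_two hexp)

lemma two_zpow_rpow_mul_le {s κ ε x : ℝ} {p : ℤ} (hx : x ≤ ε * ((2:ℝ) ^ p) ^ (-(s + κ))) :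
    ((2:ℝ) ^ p) ^ (1 + s) * x ≤ ε * ((2:ℝ) ^ p) ^ (1 - κ) :=
  calc ((2:ℝ) ^ p) ^ (1 + s) * x ≤ ((2:ℝ) ^ p) ^ (1 + s) * (ε * ((2:ℝ) ^ p) ^ (-(s + κ))) :=
        mul_le_mul_of_nonneg_left hx (by positivity)
    _ = ε * ((2:ℝ) ^ p) ^ (1 - κ) := by
        rw [mul_left_comm, ← Real.rpow_add (by positivity)]
        ring_nf

lemma sum_Icc_le_add_mul {t : ℤ → ℝ} {N q : ℕ} {M : ℝ} (hNq : N ≤ q) (hM : 0 ≤ M)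
    (ht : ∀ p : ℤ, (N:ℤ) < p → p ≤ q → t p ≤ M) :
    ∑ p ∈ Icc (-1:ℤ) q, t p ≤ ∑ p ∈ Icc (-1:ℤ) N, t p + q * M := by
  have hsplit : Icc (-1:ℤ) q = Icc (-1:ℤ) N ∪ Ioc (N:ℤ) q := by
    rw [← coe_inj, coe_union, coe_Icc, coe_Icc, coe_Ioc, Set.Icc_union_Ioc_eq_Icc] <;> omega
  have htail : ∑ p ∈ Ioc (N:ℤ) q, t p ≤ q * M := by
    refine (sum_le_card_nsmul _ _ M fun p hp => ?_).trans ?_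
    · rw [mem_Ioc] at hp
      exact ht p hp.1 hp.2
    · rw [nsmul_eq_mul, Int.card_Ioc]
      gcongr
      exact_mod_cast (show ((q:ℤ) - N).toNat ≤ q by omega)
  rw [hsplit, sum_union (disjoint_left.mpr fun p h₁ h₂ => by simp at h₁ h₂; omega)]
  linarith

lemma tendsto_two_zpow_inv_mul_add {K ε β : ℝ} (hβ : β < 1) :
    Tendsto (fun q : ℕ => ((2:ℝ) ^ (q:ℤ))⁻¹ * (K + q * (ε * ((2:ℝ) ^ (q:ℤ)) ^ β)))
      atTop (𝓝 0) := by
  have hρ : 0 < (2:ℝ) ^ (β - 1) := by positivity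
  have hform : ∀ q : ℕ, ((2:ℝ) ^ (q:ℤ))⁻¹ * (K + q * (ε * ((2:ℝ) ^ (q:ℤ)) ^ β))
      = K * (2⁻¹) ^ q + ε * (q * ((2:ℝ) ^ (β - 1)) ^ q) := by
    intro q
    rw [← Real.rpow_zpow_comm zero_le_two, zpow_natCast, zpow_natCast, Real.rpow_sub two_pos,
      Real.rpow_one, div_eq_mul_inv, mul_pow, inv_pow]
    ring
  simp only [hform]
  simpa using
    ((tendsto_pow_atTop_nhds_zero_of_lt_one (r := (2:ℝ)⁻¹) (by norm_num) (by norm_num)).const_mul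
      K).add ((tendsto_self_mul_const_pow_of_lt_one hρ.le
      (Real.rpow_lt_one_of_one_lt_of_neg one_lt_two (by linarith))).const_mul ε)

lemma eventually_two_zpow_inv_mul_sum_lt {t : ℤ → ℝ} {N : ℕ} {ε β C : ℝ} (hε : 0 ≤ ε)
    (hβ₀ : 0 ≤ β) (hβ₁ : β < 1) (hC : 0 < C)
    (ht : ∀ p : ℤ, (N:ℤ) < p → t p ≤ ε * ((2:ℝ) ^ p) ^ β) :
    ∀ᶠ q : ℕ in atTop, ((2:ℝ) ^ (q:ℤ))⁻¹ * ∑ p ∈ Icc (-1:ℤ) q, t p < C := by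
  filter_upwards [(tendsto_two_zpow_inv_mul_add (K := ∑ p ∈ Icc (-1:ℤ) N, t p) (ε := ε)
    hβ₁).eventually_lt_const hC, eventually_ge_atTop N] with q hq hNq
  refine lt_of_le_of_lt (mul_le_mul_of_nonneg_left
    (sum_Icc_le_add_mul hNq (by positivity) fun p hNp hpq => ?_) (by positivity)) hq
  refine (ht p hNp).trans (mul_le_mul_of_nonneg_left ?_ hε)
  exact Real.rpow_le_rpow (by positivity) (zpow_le_zpow_right₀ one_le_two hpq) hβ₀

lemma lambdaB_ne_top_of_goodB {L c μ r δ : ℝ} {a G : ℤ → ℝ} {q : ℕ}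
    (hq : GoodB L c μ r δ a G q) : LambdaB L c μ r δ a G ≠ ⊤ :=
  ne_top_of_le_ne_top (ENNReal.pow_ne_top ENNReal.ofNat_ne_top) (sInf_le ⟨q, hq, rfl⟩)

theorem magnetic_wavenumber_finite_general
    (L r c μ δ δb CB : ℝ) (hL : 1 ≤ L) (hc : 0 < c) (hμ : 0 < μ)
    (hδ : 0 ≤ δ) (hδb1 : 2 * δ + 1 < δb) (hδb3 : δb < 3) (hCB : 0 < CB)
    (a G : ℤ → ℝ)
    (hBern : ∀ q : ℤ, -1 ≤ q →
      G q ≤ CB * ∑ p ∈ Finset.Icc (-1 : ℤ) q, ((2:ℝ) ^ p) ^ (1 + 3 / r) * a p)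
    (hS : (∑' n : ℕ,
        ENNReal.ofReal
          (((2:ℝ) ^ ((n : ℤ) - 1)) ^ (-1 + δb + 6 / r) * a ((n : ℤ) - 1) ^ 2)) ≠ ⊤) :
    (∃ q : ℕ, GoodB L c μ r δ a G q) ∧ LambdaB L c μ r δ a G ≠ ⊤ := by
  set ε := c * μ / (2 * L ^ δ)
  have hLδ : 0 < L ^ δ := Real.rpow_pos_of_pos (by linarith) δ
  have hε : 0 < ε := by positivity
  have hLδε : L ^ δ * ε < c * μ := by
    rw [mul_div_assoc', div_lt_iff₀ (by positivity)]
    nlinarith [mul_pos (mul_pos hc hμ) hLδ]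
  obtain ⟨N, hN⟩ := exists_le_mul_two_zpow_of_summable hε
    ((ENNReal.summable_toReal hS).congr fun n => ENNReal.toReal_ofReal (by positivity))
  rw [show -((-1 + δb + 6 / r) / 2) = -(3 / r + (δb - 1) / 2) by ring] at hN
  have hlow : ∀ᶠ q : ℕ in atTop, ((2:ℝ) ^ (q:ℤ))⁻¹ * G q < c * μ := by
    filter_upwards [eventually_two_zpow_inv_mul_sum_lt hε.le (by linarith) (by linarith)
      (div_pos (mul_pos hc hμ) hCB) fun p hp => two_zpow_rpow_mul_le (hN p hp.le)] with q hq
    calc ((2:ℝ) ^ (q:ℤ))⁻¹ * G q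
        ≤ CB * (((2:ℝ) ^ (q:ℤ))⁻¹ * ∑ p ∈ Icc (-1 : ℤ) q, ((2:ℝ) ^ p) ^ (1 + 3 / r) * a p) := by
          rw [mul_left_comm]
          exact mul_le_mul_of_nonneg_left (hBern q (by omega)) (by positivity)
      _ < c * μ := by rwa [← lt_div_iff₀' hCB]
  obtain ⟨q, hNq, hq⟩ := ((eventually_ge_atTop N).and hlow).exists
  have hgood : GoodB L c μ r δ a G q := ⟨fun p hqp => (weighted_block_le (by linarith) hδ
    (by linarith) hε.le (by positivity) hqp.le (hN p (by omega))).trans_lt hLδε, hq⟩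
  exact ⟨⟨q, hgood⟩, lambdaB_ne_top_of_goodB hgood⟩

/-- if `δ ≥ 0`, `2δ+1 < δ_b < 3`, and the weighted sum
`Σ_{q ≥ -1} λ_q^{-1+δ_b+6/r} a_q²` is finite, then some natural number `q` satisfies both
conditions in the definition of the magnetic determining wavenumber; that is, `Λ_b < ∞`. -/
theorem magnetic_wavenumber_finite
    (L r c μ δ δb CB : ℝ) (hL : 1 ≤ L) (hr : 0 < r) (hc : 0 < c) (hμ : 0 < μ)
    (hδ : 0 ≤ δ) (hδb1 : 2 * δ + 1 < δb) (hδb3 : δb < 3) (hCB : 0 < CB)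
    (a G : ℤ → ℝ)
    (ha0 : ∀ q : ℤ, -1 ≤ q → 0 ≤ a q)
    (hG0 : ∀ q : ℤ, -1 ≤ q → 0 ≤ G q)
    (hBern : ∀ q : ℤ, -1 ≤ q →
      G q ≤ CB * ∑ p ∈ Finset.Icc (-1 : ℤ) q, ((2:ℝ) ^ p) ^ (1 + 3 / r) * a p)
    (hS : (∑' n : ℕ,
        ENNReal.ofReal
          (((2:ℝ) ^ ((n : ℤ) - 1)) ^ (-1 + δb + 6 / r) * a ((n : ℤ) - 1) ^ 2)) ≠ ⊤) :
    (∃ q : ℕ, GoodB L c μ r δ a G q) ∧ LambdaB L c μ r δ a G ≠ ⊤ :=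
  magnetic_wavenumber_finite_general L r c μ δ δb CB hL hc hμ hδ hδb1 hδb3 hCB a G hBern hS
end

section
/- Let r > 0 and δ_b < 3 be real numbers, and let a : {q ∈ ℤ : q ≥ −1} → [0,∞) satisfy S := Σ_{q≥−1} λ_q^{−1+δ_b+6/r} a_q² < ∞. Then for every integer q ≥ −1: λ_q^{−1} · Σ_{p=−1}^{q} λ_p^{1+3/r} a_p ≤ (1 − 2^{(δ_b−3)/2})^{−1} · λ_q^{(1−δ_b)/2} · √S. In particular, if δ_b > 1 then the left-hand side tends to 0 as q → ∞. -/
/-!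
Write `λ_p = 2^p`, `s = -1 + δ_b + 6/r` and `β = (3 - δ_b)/2 > 0`, so that `1 + 3/r = s/2 + β`.
Each term of the series is at most `S`, hence `λ_p^{1+3/r} |a_p| = λ_p^β √(λ_p^s a_p²) ≤ λ_p^β √S`;
summing the geometric sequence `λ_p^β` up to `q` costs the factor `(1 - 2^{-β})⁻¹`, and dividing
by `λ_q` leaves `λ_q^{β-1} = λ_q^{(1-δ_b)/2}`. The bound holds for the absolute value, so when
`δ_b > 1` it squeezes the left-hand side to `0`.
-/

open Filter Topology

theorem sum_Icc_zpow_le_s11 {K : Type*} [Field K] [LinearOrder K] [IsStrictOrderedRing K] {c : K}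
    (hc : 1 < c) (m q : ℤ) : ∑ p ∈ Finset.Icc m q, c ^ p ≤ (1 - c⁻¹)⁻¹ * c ^ q := by
  have hc₀ : 0 < c := zero_lt_one.trans hc
  have hρ : 0 < 1 - c⁻¹ := sub_pos.2 (inv_lt_one_of_one_lt₀ hc)
  obtain hq | hq := lt_or_ge q m
  · rw [Finset.Icc_eq_empty_of_lt hq, Finset.sum_empty]
    positivity
  induction q, hq using Int.leInduction with
  | base =>
    rw [Finset.Icc_self, Finset.sum_singleton]
    exact le_mul_of_one_le_left (by positivity) (one_le_inv₀ hρ |>.2 (by linarith [inv_pos.2 hc₀]))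
  | succ q hmq ih =>
    rw [← Finset.insert_Icc_right_eq_Icc_add_one (by omega), Finset.sum_insert (by simp)]
    have key : c ^ (q + 1) + (1 - c⁻¹)⁻¹ * c ^ q = (1 - c⁻¹)⁻¹ * c ^ (q + 1) := by
      rw [zpow_add_one₀ hc₀.ne']
      field_simp
      ring
    linarith

theorem Real.rpow_add_mul_abs_le {x s β a S : ℝ} (hx : 0 < x) (h : x ^ s * a ^ 2 ≤ S) :
    x ^ (s / 2 + β) * |a| ≤ x ^ β * √S := calc
  x ^ (s / 2 + β) * |a| = x ^ β * √(x ^ s * a ^ 2) := by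
    rw [Real.sqrt_mul (by positivity), Real.sqrt_sq_eq_abs, Real.sqrt_eq_rpow,
      ← Real.rpow_mul hx.le, Real.rpow_add hx]
    ring_nf
  _ ≤ x ^ β * √S := by gcongr

theorem le_tsum_natCast_sub {f : ℤ → ℝ} (hf : ∀ p, 0 ≤ f p) {m : ℤ}
    (hs : Summable fun n : ℕ => f (n - m)) {p : ℤ} (hp : -m ≤ p) :
    f p ≤ ∑' n : ℕ, f (n - m) := by
  have hn : ((p + m).toNat : ℤ) - m = p := by omega
  simpa only [hn] using hs.le_tsum (p + m).toNat fun n _ => hf _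

theorem tendsto_zpow_rpow_atTop_zero {b e : ℝ} (hb : 1 < b) (he : e < 0) :
    Tendsto (fun q : ℤ => (b ^ q) ^ e) atTop (𝓝 0) := by
  have hpow : Tendsto (fun q : ℤ => b ^ q) atTop atTop := by
    simpa only [Function.comp_def, Real.rpow_intCast] using
      (tendsto_rpow_atTop_of_base_gt_one b hb).comp tendsto_intCast_atTop_atTop
  simpa only [neg_neg, Function.comp_def] using (tendsto_rpow_neg_atTop (neg_pos.2 he)).comp hpow

theorem abs_inv_mul_sum_rpow_mul_le {b s β : ℝ} (hb : 1 < b) (hβ : 0 < β) {m : ℤ} {a : ℤ → ℝ}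
    (hS : Summable fun n : ℕ => (b ^ ((n : ℤ) - m)) ^ s * a ((n : ℤ) - m) ^ 2) (q : ℤ) :
    |(b ^ q)⁻¹ * ∑ p ∈ Finset.Icc (-m) q, (b ^ p) ^ (s / 2 + β) * a p| ≤
      (1 - b ^ (-β))⁻¹ * (b ^ q) ^ (β - 1) *
        √(∑' n : ℕ, (b ^ ((n : ℤ) - m)) ^ s * a ((n : ℤ) - m) ^ 2) := by
  set S := ∑' n : ℕ, (b ^ ((n : ℤ) - m)) ^ s * a ((n : ℤ) - m) ^ 2
  have hb₀ : 0 < b := zero_lt_one.trans hb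
  have hbβ : 1 < b ^ β := Real.one_lt_rpow hb hβ
  have hterm : ∀ p ∈ Finset.Icc (-m) q, |(b ^ p) ^ (s / 2 + β) * a p| ≤ (b ^ β) ^ p * √S := by
    intro p hp
    rw [abs_mul, abs_of_pos (by positivity), Real.rpow_zpow_comm hb₀.le]
    refine Real.rpow_add_mul_abs_le (by positivity) ?_
    exact le_tsum_natCast_sub (f := fun p => (b ^ p) ^ s * a p ^ 2) (fun p => by positivity) hS
      (Finset.mem_Icc.1 hp).1
  calc |(b ^ q)⁻¹ * ∑ p ∈ Finset.Icc (-m) q, (b ^ p) ^ (s / 2 + β) * a p|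
      ≤ (b ^ q)⁻¹ * ∑ p ∈ Finset.Icc (-m) q, (b ^ β) ^ p * √S := by
        rw [abs_mul, abs_of_pos (by positivity)]
        gcongr
        exact (Finset.abs_sum_le_sum_abs _ _).trans (Finset.sum_le_sum hterm)
    _ ≤ (b ^ q)⁻¹ * ((1 - (b ^ β)⁻¹)⁻¹ * (b ^ β) ^ q * √S) := by
        rw [← Finset.sum_mul]
        gcongr
        exact sum_Icc_zpow_le_s11 hbβ _ _
    _ = (1 - b ^ (-β))⁻¹ * (b ^ q) ^ (β - 1) * √S := by
        rw [Real.rpow_neg hb₀.le, Real.rpow_sub_one (by positivity), Real.rpow_zpow_comm hb₀.le]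
        ring

theorem magnetic_lowFreq_decay_general
    (r δb : ℝ) (hδb : δb < 3)
    (a : ℤ → ℝ)
    (hS : Summable fun n : ℕ =>
      ((2:ℝ) ^ ((n:ℤ) - 1)) ^ (-1 + δb + 6 / r) * a ((n:ℤ) - 1) ^ 2) :
    (∀ q : ℤ, -1 ≤ q →
        ((2:ℝ) ^ q)⁻¹ * ∑ p ∈ Finset.Icc (-1 : ℤ) q, ((2:ℝ) ^ p) ^ (1 + 3 / r) * a p ≤
          (1 - (2:ℝ) ^ ((δb - 3) / 2))⁻¹ * ((2:ℝ) ^ q) ^ ((1 - δb) / 2) *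
            Real.sqrt (∑' n : ℕ,
              ((2:ℝ) ^ ((n:ℤ) - 1)) ^ (-1 + δb + 6 / r) * a ((n:ℤ) - 1) ^ 2)) ∧
      (1 < δb →
        Tendsto
          (fun q : ℤ =>
            ((2:ℝ) ^ q)⁻¹ * ∑ p ∈ Finset.Icc (-1 : ℤ) q, ((2:ℝ) ^ p) ^ (1 + 3 / r) * a p)
          atTop (𝓝 0)) := by
  have hbound := abs_inv_mul_sum_rpow_mul_le one_lt_two (β := (3 - δb) / 2) (by linarith) hS
  rw [show (-1 + δb + 6 / r) / 2 + (3 - δb) / 2 = 1 + 3 / r by ring,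
    show -((3 - δb) / 2) = (δb - 3) / 2 by ring, show (3 - δb) / 2 - 1 = (1 - δb) / 2 by ring]
    at hbound
  refine ⟨fun q _ => (le_abs_self _).trans (hbound q), fun hδb1 => squeeze_zero_norm hbound ?_⟩
  simpa using ((tendsto_zpow_rpow_atTop_zero one_lt_two
    (by linarith : (1 - δb) / 2 < 0)).const_mul _).mul_const _

/-- low-frequency decay estimate for the magnetic field (`λ_q = 2^q`):
if `S = Σ_{q ≥ -1} λ_q^{-1+δ_b+6/r} a_q²` is finite, then for every `q ≥ -1`,
`λ_q^{-1} Σ_{p=-1}^{q} λ_p^{1+3/r} a_p ≤ (1-2^{(δ_b-3)/2})^{-1} λ_q^{(1-δ_b)/2} √S`;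
in particular, if `δ_b > 1` then the left-hand side tends to `0` as `q → ∞`. -/
theorem magnetic_lowFreq_decay
    (r δb : ℝ) (hr : 0 < r) (hδb : δb < 3)
    (a : ℤ → ℝ) (ha0 : ∀ q : ℤ, -1 ≤ q → 0 ≤ a q)
    (hS : Summable fun n : ℕ =>
      ((2:ℝ) ^ ((n:ℤ) - 1)) ^ (-1 + δb + 6 / r) * a ((n:ℤ) - 1) ^ 2) :
    (∀ q : ℤ, -1 ≤ q →
        ((2:ℝ) ^ q)⁻¹ * ∑ p ∈ Finset.Icc (-1 : ℤ) q, ((2:ℝ) ^ p) ^ (1 + 3 / r) * a p ≤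
          (1 - (2:ℝ) ^ ((δb - 3) / 2))⁻¹ * ((2:ℝ) ^ q) ^ ((1 - δb) / 2) *
            Real.sqrt (∑' n : ℕ,
              ((2:ℝ) ^ ((n:ℤ) - 1)) ^ (-1 + δb + 6 / r) * a ((n:ℤ) - 1) ^ 2)) ∧
      (1 < δb →
        Tendsto
          (fun q : ℤ =>
            ((2:ℝ) ^ q)⁻¹ * ∑ p ∈ Finset.Icc (-1 : ℤ) q, ((2:ℝ) ^ p) ^ (1 + 3 / r) * a p)
          atTop (𝓝 0)) :=
  magnetic_lowFreq_decay_general r δb hδb a hS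
end
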